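/- arXiv:2410.15619 — 2 statements merged into one kernel-verified Lean document; each statement's English description precedes it below -/
import Mathlib

section
/- Let d, ℓ, γ be real numbers with ℓ > 1, ℓ^{-1/2} < γ < 1, 3 + 2ℓ > d, and ℓ < d − 1. Then: (i) for every Y < 0, U_{ΔY}′(Y) > 0 and U_{ΔU}′(Y) > 0; (ii) for every Y with −γ < Y < 0, U_g′(Y) > 0. -/
/-!
Write `f(Y) = -ε - A Y + B Y²`. The quotient rule gives
`U_{ΔY}' = ((1 - d) f - (Y - 1)(dY - 1) f') / (dY - 1)²`, and the numerator expands to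
`((d - 1) ℓ γ² + A - (d - 1)) - 2 (A + B) Y + (A d + B (d + 3)) Y² - 2 d B Y³`,
a cubic whose coefficients alternate in sign, hence positive for `Y < 0`, as soon as
`A > d - 1 > 0` and `B > 0`. The two other derivatives are affine in `Y`. Everything rests on
`A - (d - 1) = 2 (1 - γ) + γ (3 + 2ℓ - d) > 0`.
-/

namespace Stmt2

theorem hasDerivAt_quadratic (a b c Y : ℝ) :
    HasDerivAt (fun y : ℝ => c - a * y + b * y ^ 2) (-a + 2 * b * Y) Y := by
  have hsq : HasDerivAt (fun y : ℝ => y ^ 2) (2 * Y) Y := by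
    simpa using hasDerivAt_pow 2 Y
  exact (((hasDerivAt_id Y).const_mul a).const_sub c).add (hsq.const_mul b)
    |>.congr_deriv (by ring)

theorem hasDerivAt_neg_quadratic_sub_mul_one_sub (a b c k Y : ℝ) :
    HasDerivAt (fun y : ℝ => -(c - a * y + b * y ^ 2) - k * y * (1 - y))
      (a - 2 * b * Y - k * (1 - 2 * Y)) Y := by
  have hq : HasDerivAt (fun y : ℝ => k * y * (1 - y)) (k * 1 * (1 - Y) + k * Y * (-1)) Y :=
    ((hasDerivAt_id' Y).const_mul k).mul ((hasDerivAt_id' Y).const_sub 1)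
  exact ((hasDerivAt_quadratic a b c Y).neg.sub hq).congr_deriv (by ring)

theorem hasDerivAt_neg_sub_one_mul_div {f : ℝ → ℝ} {f' d Y : ℝ} (hf : HasDerivAt f f' Y)
    (hY : d * Y - 1 ≠ 0) :
    HasDerivAt (fun y : ℝ => -((y - 1) * f y) / (d * y - 1))
      (((1 - d) * f Y - (Y - 1) * (d * Y - 1) * f') / (d * Y - 1) ^ 2) Y := by
  have hnum : HasDerivAt (fun y : ℝ => -((y - 1) * f y)) (-(1 * f Y + (Y - 1) * f')) Y :=
    (((hasDerivAt_id' Y).sub_const 1).mul hf).neg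
  have hden : HasDerivAt (fun y : ℝ => d * y - 1) (d * 1) Y :=
    ((hasDerivAt_id' Y).const_mul d).sub_const 1
  exact (hnum.div hden hY).congr_deriv (by ring)

theorem quotient_numerator_pos {a b c d Y : ℝ} (hd : 0 ≤ d) (ha : 0 < a) (hb : 0 < b)
    (hc : 0 < (1 - d) * c + a) (hY : Y < 0) :
    0 < (1 - d) * (c - a * Y + b * Y ^ 2) - (Y - 1) * (d * Y - 1) * (-a + 2 * b * Y) := by
  have hexpand : (1 - d) * (c - a * Y + b * Y ^ 2) - (Y - 1) * (d * Y - 1) * (-a + 2 * b * Y)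
      = ((1 - d) * c + a) + 2 * (a + b) * (-Y) + (a * d + b * (d + 3)) * Y ^ 2
        + 2 * d * b * (-Y) ^ 3 := by ring
  have hY' : 0 < -Y := neg_pos.2 hY
  rw [hexpand]
  have h1 : 0 < 2 * (a + b) * (-Y) := by positivity
  have h2 : 0 < (a * d + b * (d + 3)) * Y ^ 2 :=
    mul_pos (by nlinarith) (sq_pos_of_neg hY)
  have h3 : 0 ≤ 2 * d * b * (-Y) ^ 3 := by positivity
  linarith

/-- Monotonicity of the roots `U_{ΔY}`, `U_{ΔU}`, `U_g` on the relevant ranges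
(Lemma on monotone properties). -/
theorem mono_roots (d ℓ γ : ℝ) (hℓ : 1 < ℓ) (hγl : (Real.sqrt ℓ)⁻¹ < γ) (hγu : γ < 1)
    (hd1 : d < 3 + 2 * ℓ) (hd2 : ℓ < d - 1) :
    (∀ Y : ℝ, Y < 0 →
        0 < deriv (fun y : ℝ =>
              -((y - 1) * (-(ℓ * γ ^ 2 - 1) - (d + 1 - (d - 1 - 2 * ℓ) * γ) * y
                  + (2 * d - 1 - ℓ) * y ^ 2)) / (d * y - 1)) Y ∧
        0 < deriv (fun y : ℝ =>
              -(-(ℓ * γ ^ 2 - 1) - (d + 1 - (d - 1 - 2 * ℓ) * γ) * y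
                  + (2 * d - 1 - ℓ) * y ^ 2) - (d - 1) * y * (1 - y)) Y) ∧
    (∀ Y : ℝ, -γ < Y → Y < 0 →
        0 < deriv (fun y : ℝ => ℓ * (y + γ) ^ 2 - (1 - y) ^ 2) Y) := by
  have hγ : 0 < γ := (inv_nonneg.2 (Real.sqrt_nonneg ℓ)).trans_lt hγl
  have hA : d - 1 < d + 1 - (d - 1 - 2 * ℓ) * γ := by
    nlinarith [mul_pos hγ (sub_pos.2 hd1)]
  refine ⟨fun Y hY => ⟨?_, ?_⟩, fun Y hYγ hY => ?_⟩
  · have hden : d * Y - 1 < 0 := by nlinarith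
    rw [(hasDerivAt_neg_sub_one_mul_div (hasDerivAt_quadratic _ _ _ Y) hden.ne).deriv]
    refine div_pos (quotient_numerator_pos (by linarith) (by linarith) (by linarith) ?_ hY)
      (sq_pos_of_neg hden)
    nlinarith [mul_pos (mul_pos (by linarith : (0 : ℝ) < d - 1) (by linarith : (0 : ℝ) < ℓ))
      (pow_pos hγ 2)]
  · rw [(hasDerivAt_neg_quadratic_sub_mul_one_sub _ _ _ (d - 1) Y).deriv]
    nlinarith
  · have hg : HasDerivAt (fun y : ℝ => ℓ * (y + γ) ^ 2 - (1 - y) ^ 2)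
        (2 * ℓ * (Y + γ) + 2 * (1 - Y)) Y :=
      ((((hasDerivAt_id' Y).add_const γ).pow 2).const_mul ℓ).sub
        (((hasDerivAt_id' Y).const_sub 1).pow 2) |>.congr_deriv (by push_cast; ring)
    rw [hg.deriv]
    nlinarith [mul_pos (by linarith : (0 : ℝ) < ℓ) (by linarith : 0 < Y + γ)]

end Stmt2
end

section
/- Let d = 4, ℓ = 5/3, and γ > ℓ^{-1/2}. With ε = ℓγ² − 1, A = d + 1 − (d−1−2ℓ)γ, c₁ = 2ε, c₂ = −1, c₃ = 2ε·((d−1−2ℓ)γ − 2), c₄ = (d−1)ε + A, one has: c₁ + c₄ > 0; c₁c₄ − c₂c₃ = 2(d−1)·ε·(ε+1) > 0; c₃ < 0; and (c₁+c₄)² − 4(c₁c₄ − c₂c₃) > 0. Consequently the quadratic λ² − (c₁+c₄)λ + (c₁c₄ − c₂c₃) = 0 has two distinct real roots λ₋ < λ₊ which satisfy 0 < λ₋ < λ₊. -/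
noncomputable section

namespace Stmt4

def epsP (γ : ℝ) : ℝ := (5/3) * γ ^ 2 - 1

def Aval (γ : ℝ) : ℝ := (4 : ℝ) + 1 - ((4 : ℝ) - 1 - 2 * (5/3)) * γ

def c1 (γ : ℝ) : ℝ := 2 * epsP γ

def c2 : ℝ := -1

def c3 (γ : ℝ) : ℝ := 2 * epsP γ * (((4 : ℝ) - 1 - 2 * (5/3)) * γ - 2)

def c4 (γ : ℝ) : ℝ := ((4 : ℝ) - 1) * epsP γ + Aval γ

/-- Properties of the Jacobian entries at the sonic point for `d = 4, ℓ = 5/3`,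
`γ > ℓ^{-1/2}`, and existence of two distinct positive eigenvalues `0 < λ₋ < λ₊`. -/
theorem jacobian_eigenvalues (γ : ℝ) (hγ : (Real.sqrt (5/3))⁻¹ < γ) :
    0 < c1 γ + c4 γ ∧
    c1 γ * c4 γ - c2 * c3 γ = 2 * ((4 : ℝ) - 1) * epsP γ * (epsP γ + 1) ∧
    0 < c1 γ * c4 γ - c2 * c3 γ ∧
    c3 γ < 0 ∧
    0 < (c1 γ + c4 γ) ^ 2 - 4 * (c1 γ * c4 γ - c2 * c3 γ) ∧
    ∃ lm lp : ℝ,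
      lm ≠ lp ∧
      lm ^ 2 - (c1 γ + c4 γ) * lm + (c1 γ * c4 γ - c2 * c3 γ) = 0 ∧
      lp ^ 2 - (c1 γ + c4 γ) * lp + (c1 γ * c4 γ - c2 * c3 γ) = 0 ∧
      0 < lm ∧ lm < lp := by
  have h53 : (0:ℝ) < 5/3 := by norm_num
  have hsp : 0 < Real.sqrt (5/3) := Real.sqrt_pos.mpr h53
  have hinv : 0 < (Real.sqrt (5/3))⁻¹ := inv_pos.mpr hsp
  have hγ0 : 0 < γ := lt_trans hinv hγ
  have h1 : ((Real.sqrt (5/3))⁻¹) ^ 2 = 3/5 := by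
    rw [inv_pow, Real.sq_sqrt h53.le]; norm_num
  have hsq : (3:ℝ)/5 < γ ^ 2 := by nlinarith [hγ, h1, hinv]
  have hε : 0 < epsP γ := by unfold epsP; linarith
  have hT : 0 < c1 γ + c4 γ := by
    unfold c1 c4 Aval; nlinarith [hε, hγ0]
  have hDeq : c1 γ * c4 γ - c2 * c3 γ = 2 * ((4 : ℝ) - 1) * epsP γ * (epsP γ + 1) := by
    unfold c1 c2 c3 c4 Aval; ring
  have hDet : 0 < c1 γ * c4 γ - c2 * c3 γ := by
    rw [hDeq]; nlinarith [hε]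
  have hc3 : c3 γ < 0 := by
    unfold c3; nlinarith [hε, hγ0]
  have hDisc : 0 < (c1 γ + c4 γ) ^ 2 - 4 * (c1 γ * c4 γ - c2 * c3 γ) := by
    unfold c1 c2 c3 c4 Aval epsP; nlinarith [hε, hγ0, sq_nonneg γ, mul_pos hγ0 hε]
  refine ⟨hT, hDeq, hDet, hc3, hDisc, ?_⟩
  set T := c1 γ + c4 γ with hTdef
  set Dt := c1 γ * c4 γ - c2 * c3 γ with hDtdef
  set s := Real.sqrt (T ^ 2 - 4 * Dt) with hsdef
  have hs2 : s ^ 2 = T ^ 2 - 4 * Dt := Real.sq_sqrt hDisc.le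
  have hspos : 0 < s := Real.sqrt_pos.mpr hDisc
  refine ⟨(T - s) / 2, (T + s) / 2, ?_, ?_, ?_, ?_, ?_⟩
  · intro h; nlinarith [hspos]
  · linear_combination (1/4 : ℝ) * hs2
  · linear_combination (1/4 : ℝ) * hs2
  · nlinarith [hspos, hT, hs2, hDet]
  · linarith

end Stmt4
end
end
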